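/- With 𝓐, A_a, A_b, B as in the limit problem: if λ belongs to exactly one of σ(A_a), σ(B), σ(A_b), then λ is an algebraically simple eigenvalue of 𝓐. Moreover its eigenvector is (u_λ, 0, 0) if λ ∈ σ(A_a), (0, 0, v_λ) if λ ∈ σ(A_b), and (T_a(λ)w_λ, w_λ, T_b(λ)w_λ) if λ ∈ σ(B), where T_a(λ)w_λ is the unique solution of −u''+qu = λru on (a,0) with ℓ_a u = 0 and u(0) = w_λ(−1), and similarly for T_b(λ)w_λ. -/

import Mathlib

open Set

def Reg2 (u : ℝ → ℂ) (s : Set ℝ) : Prop :=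
  (∀ x ∈ s, DifferentiableAt ℝ u x) ∧ ∀ x ∈ s, DifferentiableAt ℝ (deriv u) x

/-- `u` is an eigenfunction of `A_a` for `λ`. -/
def EigfunAa (a α : ℝ) (q r : ℝ → ℝ) (lam : ℂ) (u : ℝ → ℂ) : Prop :=
  Reg2 u (Icc a 0) ∧
  (∀ x ∈ Icc a 0, -(deriv (deriv u) x) + (q x : ℂ) * u x = lam * (r x : ℂ) * u x) ∧
  u a * (Real.cos α : ℂ) + deriv u a * (Real.sin α : ℂ) = 0 ∧
  u 0 = 0 ∧ ∃ x ∈ Icc a 0, u x ≠ 0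

/-- `v` is an eigenfunction of `A_b` for `λ`. -/
def EigfunAb (b β : ℝ) (q r : ℝ → ℝ) (lam : ℂ) (v : ℝ → ℂ) : Prop :=
  Reg2 v (Icc 0 b) ∧
  (∀ x ∈ Icc 0 b, -(deriv (deriv v) x) + (q x : ℂ) * v x = lam * (r x : ℂ) * v x) ∧
  v 0 = 0 ∧
  v b * (Real.cos β : ℂ) + deriv v b * (Real.sin β : ℂ) = 0 ∧
  ∃ x ∈ Icc 0 b, v x ≠ 0

/-- `w` is an eigenfunction of the Neumann operator `B` for `λ`. -/
def EigfunB (hh : ℝ → ℝ) (lam : ℂ) (w : ℝ → ℂ) : Prop :=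
  Reg2 w (Icc (-1) 1) ∧
  (∀ t ∈ Icc (-1:ℝ) 1, -(deriv (deriv w) t) = lam * (hh t : ℂ) * w t) ∧
  deriv w (-1) = 0 ∧ deriv w 1 = 0 ∧ ∃ t ∈ Icc (-1:ℝ) 1, w t ≠ 0

def EigAa (a α : ℝ) (q r : ℝ → ℝ) (lam : ℂ) : Prop := ∃ u, EigfunAa a α q r lam u
def EigAb (b β : ℝ) (q r : ℝ → ℝ) (lam : ℂ) : Prop := ∃ v, EigfunAb b β q r lam v
def EigB (hh : ℝ → ℝ) (lam : ℂ) : Prop := ∃ w, EigfunB hh lam w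

/-- solution of `−u''+qu = λru` on `(a,0)` with `ℓ_a u = 0` and `u(0) = c`
(this is `T_a(λ)` applied to boundary data `c`). -/
def SolAa (a α : ℝ) (q r : ℝ → ℝ) (lam : ℂ) (c : ℂ) (u : ℝ → ℂ) : Prop :=
  Reg2 u (Icc a 0) ∧
  (∀ x ∈ Icc a 0, -(deriv (deriv u) x) + (q x : ℂ) * u x = lam * (r x : ℂ) * u x) ∧
  u a * (Real.cos α : ℂ) + deriv u a * (Real.sin α : ℂ) = 0 ∧
  u 0 = c

/-- solution of `−v''+qv = λrv` on `(0,b)` with `v(0) = c` and `ℓ_b v = 0`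
(this is `T_b(λ)` applied to boundary data `c`). -/
def SolAb (b β : ℝ) (q r : ℝ → ℝ) (lam : ℂ) (c : ℂ) (v : ℝ → ℂ) : Prop :=
  Reg2 v (Icc 0 b) ∧
  (∀ x ∈ Icc 0 b, -(deriv (deriv v) x) + (q x : ℂ) * v x = lam * (r x : ℂ) * v x) ∧
  v 0 = c ∧
  v b * (Real.cos β : ℂ) + deriv v b * (Real.sin β : ℂ) = 0

/-- `(u,w,v)` belongs to the domain of the block operator `𝓐`. -/
def DomA (a b α β : ℝ) (u w v : ℝ → ℂ) : Prop :=
  Reg2 u (Icc a 0) ∧ Reg2 w (Icc (-1) 1) ∧ Reg2 v (Icc 0 b) ∧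
  u a * (Real.cos α : ℂ) + deriv u a * (Real.sin α : ℂ) = 0 ∧
  deriv w (-1) = 0 ∧ deriv w 1 = 0 ∧
  v b * (Real.cos β : ℂ) + deriv v b * (Real.sin β : ℂ) = 0 ∧
  u 0 = w (-1) ∧ v 0 = w 1

/-- `(𝓐 − λ)(u,w,v) = (f,g,k)`, componentwise. -/
def MapA (a b : ℝ) (q r hh : ℝ → ℝ) (lam : ℂ) (u w v f g k : ℝ → ℂ) : Prop :=
  (∀ x ∈ Icc a 0,
    -(deriv (deriv u) x) + (q x : ℂ) * u x - lam * (r x : ℂ) * u x = (r x : ℂ) * f x) ∧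
  (∀ t ∈ Icc (-1:ℝ) 1,
    -(deriv (deriv w) t) - lam * (hh t : ℂ) * w t = (hh t : ℂ) * g t) ∧
  (∀ x ∈ Icc 0 b,
    -(deriv (deriv v) x) + (q x : ℂ) * v x - lam * (r x : ℂ) * v x = (r x : ℂ) * k x)

def ZeroF : ℝ → ℂ := fun _ => 0

def Nontriv (a b : ℝ) (u w v : ℝ → ℂ) : Prop :=
  (∃ x ∈ Icc a 0, u x ≠ 0) ∨ (∃ t ∈ Icc (-1:ℝ) 1, w t ≠ 0) ∨ (∃ x ∈ Icc 0 b, v x ≠ 0)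

/-- `(u,w,v)` is an eigenvector of `𝓐` corresponding to `λ`. -/
def EigvecA (a b α β : ℝ) (q r hh : ℝ → ℝ) (lam : ℂ) (u w v : ℝ → ℂ) : Prop :=
  DomA a b α β u w v ∧ MapA a b q r hh lam u w v ZeroF ZeroF ZeroF ∧ Nontriv a b u w v

/-!
All three cases rest on two facts about `-y'' + Q y = λ R y` on a compact interval, with `Q`, `R`
bounded and `R > 0`.

Simplicity: a solution with vanishing Cauchy data at a point vanishes (Grönwall, applied to the
first-order system for `(y, y')`). Two solutions satisfying the same Robin condition at an endpoint
have vanishing Wronskian there, hence are proportional.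

No Jordan chain: if `-u'' + Q u - λ R u = R f` and `v` solves the equation with `μ`, Lagrange's
identity gives `(u' v̄ - u v̄')' = R ((μ̄ - λ) u - f) v̄`, and self-adjoint boundary conditions
kill the boundary terms. For `u = v, f = 0` this forces `λ` to be real, and then `f = v` forces
`∫ R |v|² = 0`. Both conclusions are drawn from the monotonicity of a real primitive, so no
integrability is needed.

For `𝓐`, each component of an eigenvector solves the scalar problem on its interval. Since `λ`
lies in only one of the three spectra, the coupling conditions `φ_a(0) = ψ(-1)`, `φ_b(0) = ψ(1)`
force the components on the two other intervals to vanish or, when `λ ∈ σ(B)`, to be the multiples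
of `T_a(λ)w_λ`, `T_b(λ)w_λ` fixed by their values at `0`. A generalized eigenvector would solve the
inhomogeneous problem on the distinguished interval, which the second fact excludes.
-/

open Complex ComplexConjugate

-- `y'` is explicit data rather than `deriv y`: for a combination `u - k v` of solutions, `deriv`
-- agrees with `u' - k v'` only on `s`, which says nothing about its derivative at an endpoint.
def SolvesOn (P : ℝ → ℂ) (s : Set ℝ) (y y' : ℝ → ℂ) : Prop :=
  ∀ x ∈ s, HasDerivAt y (y' x) x ∧ HasDerivAt y' (P x * y x) x

lemma lipschitzWith_companion {p : ℂ} {M : ℝ} (hp : ‖p‖ ≤ M) :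
    LipschitzWith (max 1 M).toNNReal (fun y : ℂ × ℂ => (y.2, p * y.1)) := by
  refine LipschitzWith.of_dist_le_mul fun y z => ?_
  have hK : (1 : ℝ) ≤ max 1 M := le_max_left _ _
  rw [Real.coe_toNNReal _ (zero_le_one.trans hK), dist_eq_norm, dist_eq_norm, Prod.norm_def,
    Prod.norm_def]
  simp only [Prod.fst_sub, Prod.snd_sub, ← mul_sub, norm_mul]
  refine max_le ?_ ?_
  · exact (le_max_right _ _).trans (le_mul_of_one_le_left (by positivity) hK)
  · exact mul_le_mul (hp.trans (le_max_right _ _)) (le_max_left _ _) (norm_nonneg _)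
      (zero_le_one.trans hK)

lemma wronskian_eq_zero_of_robin {K : Type*} [Field K] {C S u₀ u₁ v₀ v₁ : K}
    (hCS : C ≠ 0 ∨ S ≠ 0) (hu : u₀ * C + u₁ * S = 0) (hv : v₀ * C + v₁ * S = 0) :
    u₁ * v₀ - u₀ * v₁ = 0 := by
  have hWC : (u₁ * v₀ - u₀ * v₁) * C = 0 := by linear_combination u₁ * hv - v₁ * hu
  have hWS : (u₁ * v₀ - u₀ * v₁) * S = 0 := by linear_combination v₀ * hu - u₀ * hv
  rcases hCS with hC | hS
  · exact (mul_eq_zero.1 hWC).resolve_right hC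
  · exact (mul_eq_zero.1 hWS).resolve_right hS

lemma wronskian_conj_eq_zero_of_robin {C S : ℝ} {u₀ u₁ v₀ v₁ : ℂ}
    (hCS : (C : ℂ) ≠ 0 ∨ (S : ℂ) ≠ 0) (hu : u₀ * C + u₁ * S = 0) (hv : v₀ * C + v₁ * S = 0) :
    u₁ * conj v₀ - u₀ * conj v₁ = 0 :=
  wronskian_eq_zero_of_robin hCS hu (by simpa using congrArg conj hv)

lemma exists_eq_mul_of_wronskian_eq_zero {K : Type*} [Field K] {u₀ u₁ v₀ v₁ : K}
    (hW : u₁ * v₀ - u₀ * v₁ = 0) (hv : v₀ ≠ 0 ∨ v₁ ≠ 0) :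
    ∃ k, u₀ = k * v₀ ∧ u₁ = k * v₁ := by
  rcases hv with h₀ | h₁
  · refine ⟨u₀ / v₀, by field_simp, ?_⟩
    field_simp
    linear_combination hW
  · refine ⟨u₁ / v₁, ?_, by field_simp⟩
    field_simp
    linear_combination -hW

section SecondOrder

variable {P : ℝ → ℂ} {s : Set ℝ} {c d e M : ℝ} {u u' v v' : ℝ → ℂ}

theorem SolvesOn.eqOn_zero (hP : ∀ x ∈ Icc c d, ‖P x‖ ≤ M) (hu : SolvesOn P (Icc c d) u u')
    (he : e ∈ Icc c d) (h0 : u e = 0) (h1 : u' e = 0) : ∀ x ∈ Icc c d, u x = 0 := by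
  set F : ℝ → ℂ × ℂ → ℂ × ℂ := fun t y => (y.2, P t * y.1)
  have hF : ∀ t ∈ Icc c d, LipschitzOnWith (max 1 M).toNNReal (F t) univ :=
    fun t ht => (lipschitzWith_companion (hP t ht)).lipschitzOnWith
  have hU : ∀ t ∈ Icc c d, HasDerivAt (fun t => (u t, u' t)) (F t (u t, u' t)) t :=
    fun t ht => (hu t ht).1.prodMk (hu t ht).2
  have hUc : ContinuousOn (fun t => (u t, u' t)) (Icc c d) :=
    fun t ht => (hU t ht).continuousAt.continuousWithinAt
  have h0' : ∀ t, HasDerivAt (fun _ => (0 : ℂ × ℂ)) (F t 0) t := fun t =>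
    (hasDerivAt_const t (0 : ℂ × ℂ)).congr_deriv (by ext <;> simp [F])
  have hUe : (u e, u' e) = 0 := by simp [h0, h1]
  have key : EqOn (fun t => (u t, u' t)) (fun _ => 0) (Icc c e ∪ Icc e d) := by
    refine EqOn.union ?_ ?_
    · exact ODE_solution_unique_of_mem_Icc_left (s := fun _ => univ)
        (fun t ht => hF t ⟨ht.1.le, ht.2.trans he.2⟩) (hUc.mono (Icc_subset_Icc le_rfl he.2))
        (fun t ht => (hU t ⟨ht.1.le, ht.2.trans he.2⟩).hasDerivWithinAt) (fun _ _ => trivial)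
        continuousOn_const (fun t _ => (h0' t).hasDerivWithinAt) (fun _ _ => trivial) hUe
    · exact ODE_solution_unique_of_mem_Icc_right (s := fun _ => univ)
        (fun t ht => hF t ⟨he.1.trans ht.1, ht.2.le⟩) (hUc.mono (Icc_subset_Icc he.1 le_rfl))
        (fun t ht => (hU t ⟨he.1.trans ht.1, ht.2.le⟩).hasDerivWithinAt) (fun _ _ => trivial)
        continuousOn_const (fun t _ => (h0' t).hasDerivWithinAt) (fun _ _ => trivial) hUe
  rw [Icc_union_Icc_eq_Icc he.1 he.2] at key
  exact fun x hx => congrArg Prod.fst (key hx)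

lemma SolvesOn.sub_mul (hu : SolvesOn P s u u') (hv : SolvesOn P s v v') (k : ℂ) :
    SolvesOn P s (fun x => u x - k * v x) (fun x => u' x - k * v' x) := fun x hx =>
  ⟨(hu x hx).1.sub ((hv x hx).1.const_mul k),
    ((hu x hx).2.sub ((hv x hx).2.const_mul k)).congr_deriv (by ring)⟩

theorem SolvesOn.exists_eq_mul (hP : ∀ x ∈ Icc c d, ‖P x‖ ≤ M)
    (hu : SolvesOn P (Icc c d) u u') (hv : SolvesOn P (Icc c d) v v') (he : e ∈ Icc c d)
    (hW : u' e * v e - u e * v' e = 0) (hv₀ : ∃ x ∈ Icc c d, v x ≠ 0) :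
    ∃ k, ∀ x ∈ Icc c d, u x = k * v x := by
  have hve : v e ≠ 0 ∨ v' e ≠ 0 := by
    by_contra! h
    obtain ⟨x, hx, hvx⟩ := hv₀
    exact hvx (hv.eqOn_zero hP he h.1 h.2 x hx)
  obtain ⟨k, hk₀, hk₁⟩ := exists_eq_mul_of_wronskian_eq_zero hW hve
  refine ⟨k, fun x hx => sub_eq_zero.1 ((hu.sub_mul hv k).eqOn_zero hP he ?_ ?_ x hx)⟩
  · simp [hk₀]
  · simp [hk₁]

theorem SolvesOn.eqOn_mul_of_eq_mul {f : ℝ} {k : ℂ} (hP : ∀ x ∈ Icc c d, ‖P x‖ ≤ M)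
    (hu : SolvesOn P (Icc c d) u u') (hv : SolvesOn P (Icc c d) v v') (he : e ∈ Icc c d)
    (hW : u' e * v e - u e * v' e = 0) (hf : f ∈ Icc c d) (hvf : v f ≠ 0)
    (hk : u f = k * v f) : ∀ x ∈ Icc c d, u x = k * v x := by
  obtain ⟨k', hk'⟩ := hu.exists_eq_mul hP hv he hW ⟨f, hf, hvf⟩
  have : k' = k := mul_right_cancel₀ hvf ((hk' f hf).symm.trans hk)
  exact this ▸ hk'

end SecondOrder

lemma HasDerivAt.complex_re {f : ℝ → ℂ} {f' : ℂ} {x : ℝ} (h : HasDerivAt f f' x) :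
    HasDerivAt (fun y => (f y).re) f'.re x :=
  reCLM.hasFDerivAt.comp_hasDerivAt x h

lemma HasDerivAt.complex_im {f : ℝ → ℂ} {f' : ℂ} {x : ℝ} (h : HasDerivAt f f' x) :
    HasDerivAt (fun y => (f y).im) f'.im x :=
  imCLM.hasFDerivAt.comp_hasDerivAt x h

lemma eqOn_zero_of_hasDerivAt_mul_sq_norm {c d : ℝ} (hcd : c < d) {R g : ℝ → ℝ} {v : ℝ → ℂ}
    (hR : ∀ x ∈ Ioo c d, 0 < R x) (hv : ContinuousOn v (Icc c d))
    (hg : ∀ x ∈ Icc c d, HasDerivAt g (R x * ‖v x‖ ^ 2) x) (hgcd : g d ≤ g c) :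
    ∀ x ∈ Icc c d, v x = 0 := by
  have hmono : MonotoneOn g (Icc c d) := by
    refine monotoneOn_of_hasDerivWithinAt_nonneg (f' := fun x => R x * ‖v x‖ ^ 2) (convex_Icc c d)
      (fun x hx => (hg x hx).continuousAt.continuousWithinAt) (fun x hx => ?_) (fun x hx => ?_)
    all_goals simp only [interior_Icc] at hx ⊢
    · exact (hg x (Ioo_subset_Icc_self hx)).hasDerivWithinAt
    · exact mul_nonneg (hR x hx).le (by positivity)
  have hconst : ∀ x ∈ Icc c d, g x = g c := fun x hx =>
    le_antisymm ((hmono hx (right_mem_Icc.2 hcd.le) hx.2).trans hgcd)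
      (hmono (left_mem_Icc.2 hcd.le) hx hx.1)
  have hIoo : EqOn v 0 (Ioo c d) := fun x hx => by
    have hg0 : HasDerivAt g 0 x := (hasDerivAt_const x (g c)).congr_of_eventuallyEq
      (Filter.eventually_of_mem (Ioo_mem_nhds hx.1 hx.2)
        fun y hy => hconst y (Ioo_subset_Icc_self hy))
    simpa [(hR x hx).ne'] using (hg x (Ioo_subset_Icc_self hx)).unique hg0
  exact hIoo.of_subset_closure hv continuousOn_const Ioo_subset_Icc_self
    (closure_Ioo hcd.ne).symm.subset

def slPot (Q R : ℝ → ℝ) (lam : ℂ) (x : ℝ) : ℂ := Q x - lam * R x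

lemma exists_norm_slPot_le {Q R : ℝ → ℝ} (hQ : ∃ M, ∀ x, |Q x| ≤ M) (hR : ∃ M, ∀ x, |R x| ≤ M)
    (lam : ℂ) : ∃ M, ∀ x, ‖slPot Q R lam x‖ ≤ M := by
  obtain ⟨MQ, hMQ⟩ := hQ
  obtain ⟨MR, hMR⟩ := hR
  refine ⟨MQ + ‖lam‖ * MR, fun x => ?_⟩
  calc ‖slPot Q R lam x‖ ≤ ‖(Q x : ℂ)‖ + ‖lam‖ * ‖(R x : ℂ)‖ := by
        rw [slPot, ← norm_mul]; exact norm_sub_le _ _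
    _ ≤ MQ + ‖lam‖ * MR := by
        simp only [norm_real, Real.norm_eq_abs]
        gcongr
        exacts [hMQ x, hMR x]

lemma hasDerivAt_lagrange {Q R : ℝ → ℝ} {lam μ : ℂ} {f u u' v v' : ℝ → ℂ} {x : ℝ}
    (hu : HasDerivAt u (u' x) x) (hu' : HasDerivAt u' (slPot Q R lam x * u x - R x * f x) x)
    (hv : HasDerivAt v (v' x) x) (hv' : HasDerivAt v' (slPot Q R μ x * v x) x) :
    HasDerivAt (fun y => u' y * conj (v y) - u y * conj (v' y))
      (R x * ((conj μ - lam) * u x - f x) * conj (v x)) x := by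
  refine ((hu'.mul hv.star).sub (hu.mul hv'.star)).congr_deriv ?_
  simp only [slPot, star_mul', star_sub, Complex.star_def, conj_ofReal]
  ring

section SturmLiouville

variable {Q R : ℝ → ℝ} {lam : ℂ} {c d : ℝ} {u u' v v' : ℝ → ℂ}

theorem SolvesOn.im_eq_zero (hcd : c < d) (hR : ∀ x ∈ Ioo c d, 0 < R x)
    (hv : SolvesOn (slPot Q R lam) (Icc c d) v v') (hv₀ : ∃ x ∈ Icc c d, v x ≠ 0)
    (hc : v' c * conj (v c) - v c * conj (v' c) = 0)
    (hd : v' d * conj (v d) - v d * conj (v' d) = 0) : lam.im = 0 := by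
  by_contra him
  obtain ⟨x₀, hx₀, hvx₀⟩ := hv₀
  refine hvx₀ (eqOn_zero_of_hasDerivAt_mul_sq_norm hcd (R := fun x => 2 * lam.im ^ 2 * R x)
    (g := fun y => -lam.im * (v' y * conj (v y) - v y * conj (v' y)).im)
    (fun x hx => by have := hR x hx; positivity)
    (fun x hx => (hv x hx).1.continuousAt.continuousWithinAt) (fun x hx => ?_) (by simp [hc, hd])
    x₀ hx₀)
  have hW := hasDerivAt_lagrange (lam := lam) (μ := lam) (f := fun _ => 0) (hv x hx).1
    ((hv x hx).2.congr_deriv (by simp)) (hv x hx).1 (hv x hx).2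
  have hW' : R x * ((conj lam - lam) * v x - 0) * conj (v x) =
      ((-2 * lam.im * R x * ‖v x‖ ^ 2 : ℝ) : ℂ) * I := by
    have hlam := sub_conj lam
    push_cast at hlam ⊢
    linear_combination (R x * (conj lam - lam)) * mul_conj' (v x) - (R x * ‖v x‖ ^ 2) * hlam
  refine (hW.complex_im.const_mul (-lam.im)).congr_deriv ?_
  rw [hW', mul_I_im, ofReal_re]
  ring

theorem SolvesOn.eqOn_zero_of_inhomogeneous_of_im_eq_zero (hcd : c < d)
    (hR : ∀ x ∈ Ioo c d, 0 < R x) (him : lam.im = 0) (hv : SolvesOn (slPot Q R lam) (Icc c d) v v')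
    (hu : ∀ x ∈ Icc c d, HasDerivAt u (u' x) x)
    (hu' : ∀ x ∈ Icc c d, HasDerivAt u' (slPot Q R lam x * u x - R x * v x) x)
    (hc : u' c * conj (v c) - u c * conj (v' c) = 0)
    (hd : u' d * conj (v d) - u d * conj (v' d) = 0) : ∀ x ∈ Icc c d, v x = 0 := by
  refine eqOn_zero_of_hasDerivAt_mul_sq_norm hcd hR
    (g := fun y => -(u' y * conj (v y) - u y * conj (v' y)).re)
    (fun x hx => (hv x hx).1.continuousAt.continuousWithinAt) (fun x hx => ?_) (by simp [hc, hd])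
  have hW := hasDerivAt_lagrange (μ := lam) (hu x hx) (hu' x hx) (hv x hx).1 (hv x hx).2
  have hW' : R x * ((conj lam - lam) * u x - v x) * conj (v x) =
      ((-(R x * ‖v x‖ ^ 2) : ℝ) : ℂ) := by
    rw [conj_eq_iff_im.2 him]
    push_cast
    linear_combination (-(R x : ℂ)) * mul_conj' (v x)
  refine hW.complex_re.neg.congr_deriv ?_
  rw [hW', ofReal_re, neg_neg]

theorem SolvesOn.eqOn_zero_of_inhomogeneous (hcd : c < d) (hR : ∀ x ∈ Ioo c d, 0 < R x)
    (hv : SolvesOn (slPot Q R lam) (Icc c d) v v')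
    (hvc : v' c * conj (v c) - v c * conj (v' c) = 0)
    (hvd : v' d * conj (v d) - v d * conj (v' d) = 0)
    (hu : ∀ x ∈ Icc c d, HasDerivAt u (u' x) x)
    (hu' : ∀ x ∈ Icc c d, HasDerivAt u' (slPot Q R lam x * u x - R x * v x) x)
    (huc : u' c * conj (v c) - u c * conj (v' c) = 0)
    (hud : u' d * conj (v d) - u d * conj (v' d) = 0) : ∀ x ∈ Icc c d, v x = 0 := by
  intro x hx
  by_contra hvx
  exact hvx (hv.eqOn_zero_of_inhomogeneous_of_im_eq_zero hcd hR
    (hv.im_eq_zero hcd hR ⟨x, hx, hvx⟩ hvc hvd) hu hu' huc hud x hx)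

end SturmLiouville

lemma ofReal_cos_ne_zero_or_ofReal_sin_ne_zero (α : ℝ) :
    (Real.cos α : ℂ) ≠ 0 ∨ (Real.sin α : ℂ) ≠ 0 := by
  by_contra! h
  simp only [ofReal_eq_zero] at h
  simpa [h] using Real.cos_sq_add_sin_sq α

section LimitProblem

variable {a b α β : ℝ} {q r hh : ℝ → ℝ} {lam : ℂ} {s : Set ℝ} {u w : ℝ → ℂ}

lemma Reg2.hasDerivAt_deriv_slPot {f : ℝ → ℂ} (hu : Reg2 u s)
    (heq : ∀ x ∈ s, -(deriv (deriv u) x) + (q x : ℂ) * u x - lam * (r x : ℂ) * u x =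
      (r x : ℂ) * f x) :
    ∀ x ∈ s, HasDerivAt (deriv u) (slPot q r lam x * u x - r x * f x) x := fun x hx =>
  (hu.2 x hx).hasDerivAt.congr_deriv (by rw [slPot]; linear_combination -(heq x hx))

lemma Reg2.solvesOn (hu : Reg2 u s)
    (heq : ∀ x ∈ s, -(deriv (deriv u) x) + (q x : ℂ) * u x = lam * (r x : ℂ) * u x) :
    SolvesOn (slPot q r lam) s u (deriv u) := fun x hx =>
  ⟨(hu.1 x hx).hasDerivAt, (hu.2 x hx).hasDerivAt.congr_deriv
    (by rw [slPot]; linear_combination -(heq x hx))⟩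

lemma Reg2.solvesOn_neumann (hw : Reg2 w s)
    (heq : ∀ t ∈ s, -(deriv (deriv w) t) = lam * (hh t : ℂ) * w t) :
    SolvesOn (slPot 0 hh lam) s w (deriv w) :=
  hw.solvesOn fun t ht => by simpa using heq t ht

@[simp] lemma deriv_zeroF : deriv ZeroF = ZeroF := deriv_const' 0

lemma reg2_zeroF : Reg2 ZeroF s :=
  ⟨fun _ _ => differentiableAt_const 0, fun _ _ => by
    rw [deriv_zeroF]; exact differentiableAt_const (0 : ℂ)⟩

lemma mapA_zeroF_iff {u v : ℝ → ℂ} : MapA a b q r hh lam u w v ZeroF ZeroF ZeroF ↔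
    (∀ x ∈ Icc a 0, -(deriv (deriv u) x) + (q x : ℂ) * u x = lam * (r x : ℂ) * u x) ∧
    (∀ t ∈ Icc (-1:ℝ) 1, -(deriv (deriv w) t) = lam * (hh t : ℂ) * w t) ∧
    (∀ x ∈ Icc 0 b, -(deriv (deriv v) x) + (q x : ℂ) * v x = lam * (r x : ℂ) * v x) := by
  simp only [MapA, ZeroF, mul_zero, sub_eq_zero]

lemma SolAa.eqOn_zero (hA : ¬ EigAa a α q r lam) (hu : SolAa a α q r lam 0 u) :
    ∀ x ∈ Icc a 0, u x = 0 := by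
  by_contra! ⟨x, hx, hux⟩
  exact hA ⟨u, hu.1, hu.2.1, hu.2.2.1, hu.2.2.2, x, hx, hux⟩

lemma SolAb.eqOn_zero (hA : ¬ EigAb b β q r lam) (hv : SolAb b β q r lam 0 v) :
    ∀ x ∈ Icc 0 b, v x = 0 := by
  by_contra! ⟨x, hx, hvx⟩
  exact hA ⟨v, hv.1, hv.2.1, hv.2.2.1, hv.2.2.2, x, hx, hvx⟩

lemma eqOn_zero_of_not_eigB (hB : ¬ EigB hh lam) (hw : Reg2 w (Icc (-1) 1))
    (heq : ∀ t ∈ Icc (-1:ℝ) 1, -(deriv (deriv w) t) = lam * (hh t : ℂ) * w t)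
    (h₁ : deriv w (-1) = 0) (h₂ : deriv w 1 = 0) : ∀ t ∈ Icc (-1:ℝ) 1, w t = 0 := by
  by_contra! ⟨t, ht, hwt⟩
  exact hB ⟨w, hw, heq, h₁, h₂, t, ht, hwt⟩

lemma SolAa.eqOn_mul (hA : ¬ EigAa a α q r lam) (ha : a < 0) {M : ℝ}
    (hM : ∀ x, ‖slPot q r lam x‖ ≤ M) {c c' k : ℂ} {u u' : ℝ → ℂ}
    (hu : SolAa a α q r lam c u) (hu' : SolAa a α q r lam c' u') (hk : c' = k * c) :
    ∀ x ∈ Icc a 0, u' x = k * u x := by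
  by_cases hc : c = 0
  · subst hc
    rw [mul_zero] at hk
    subst hk
    intro x hx
    rw [hu'.eqOn_zero hA x hx, hu.eqOn_zero hA x hx, mul_zero]
  · exact (hu'.1.solvesOn hu'.2.1).eqOn_mul_of_eq_mul (fun x _ => hM x) (hu.1.solvesOn hu.2.1)
      (left_mem_Icc.2 ha.le)
      (wronskian_eq_zero_of_robin (ofReal_cos_ne_zero_or_ofReal_sin_ne_zero α) hu'.2.2.1 hu.2.2.1)
      (right_mem_Icc.2 ha.le) (by rwa [hu.2.2.2]) (by rw [hu'.2.2.2, hu.2.2.2, hk])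

lemma SolAb.eqOn_mul (hA : ¬ EigAb b β q r lam) (hb : 0 < b) {M : ℝ}
    (hM : ∀ x, ‖slPot q r lam x‖ ≤ M) {c c' k : ℂ} {v v' : ℝ → ℂ}
    (hv : SolAb b β q r lam c v) (hv' : SolAb b β q r lam c' v') (hk : c' = k * c) :
    ∀ x ∈ Icc 0 b, v' x = k * v x := by
  by_cases hc : c = 0
  · subst hc
    rw [mul_zero] at hk
    subst hk
    intro x hx
    rw [hv'.eqOn_zero hA x hx, hv.eqOn_zero hA x hx, mul_zero]
  · exact (hv'.1.solvesOn hv'.2.1).eqOn_mul_of_eq_mul (fun x _ => hM x) (hv.1.solvesOn hv.2.1)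
      (right_mem_Icc.2 hb.le)
      (wronskian_eq_zero_of_robin (ofReal_cos_ne_zero_or_ofReal_sin_ne_zero β) hv'.2.2.2 hv.2.2.2)
      (left_mem_Icc.2 hb.le) (by rwa [hv.2.2.1]) (by rw [hv'.2.2.1, hv.2.2.1, hk])

def IsAlgSimpleEigvecA (a b α β : ℝ) (q r hh : ℝ → ℝ) (lam : ℂ) (u w v : ℝ → ℂ) : Prop :=
  EigvecA a b α β q r hh lam u w v ∧
  (∀ u' w' v', EigvecA a b α β q r hh lam u' w' v' → ∃ c : ℂ,
    (∀ x ∈ Icc a 0, u' x = c * u x) ∧ (∀ t ∈ Icc (-1:ℝ) 1, w' t = c * w t) ∧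
    (∀ x ∈ Icc 0 b, v' x = c * v x)) ∧
  ¬ ∃ u₁ w₁ v₁, DomA a b α β u₁ w₁ v₁ ∧ MapA a b q r hh lam u₁ w₁ v₁ u w v

theorem EigfunAa.isAlgSimpleEigvecA (ha : a < 0) (hr : ∀ x, 0 < r x) {M : ℝ}
    (hM : ∀ x, ‖slPot q r lam x‖ ≤ M) (hB : ¬ EigB hh lam) (hAb : ¬ EigAb b β q r lam)
    {ulam : ℝ → ℂ} (hul : EigfunAa a α q r lam ulam) :
    IsAlgSimpleEigvecA a b α β q r hh lam ulam ZeroF ZeroF := by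
  obtain ⟨hreg, heq, hbc, h0, hne⟩ := hul
  have hsol := hreg.solvesOn heq
  have hα := ofReal_cos_ne_zero_or_ofReal_sin_ne_zero α
  refine ⟨⟨⟨hreg, reg2_zeroF, reg2_zeroF, hbc, by simp [ZeroF], by simp [ZeroF], by simp [ZeroF],
    h0, rfl⟩, mapA_zeroF_iff.2 ⟨heq, by simp [ZeroF], by simp [ZeroF]⟩, Or.inl hne⟩, ?_, ?_⟩
  · rintro u w v ⟨⟨hu, hw, hv, hbcu, hw₁, hw₂, hbcv, -, hv₀⟩, hmap, -⟩
    obtain ⟨hequ, heqw, heqv⟩ := mapA_zeroF_iff.1 hmap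
    have hw0 := eqOn_zero_of_not_eigB hB hw heqw hw₁ hw₂
    have hv0 : SolAb b β q r lam 0 v :=
      ⟨hv, heqv, hv₀.trans (hw0 1 ⟨by norm_num, le_rfl⟩), hbcv⟩
    obtain ⟨k, hk⟩ := (hu.solvesOn hequ).exists_eq_mul (fun x _ => hM x) hsol
      (left_mem_Icc.2 ha.le) (wronskian_eq_zero_of_robin hα hbcu hbc) hne
    exact ⟨k, hk, by simpa [ZeroF] using hw0, by simpa [ZeroF] using hv0.eqOn_zero hAb⟩
  · rintro ⟨u, w, v, ⟨hu, hw, -, hbcu, hw₁, hw₂, -, hu₀, -⟩, hequ, heqw, -⟩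
    have hw0 := eqOn_zero_of_not_eigB hB hw
      (fun t ht => by simpa [ZeroF, sub_eq_zero] using heqw t ht) hw₁ hw₂
    obtain ⟨x, hx, hux⟩ := hne
    refine hux (hsol.eqOn_zero_of_inhomogeneous ha (fun x _ => hr x)
      (wronskian_conj_eq_zero_of_robin hα hbc hbc) (by simp [h0])
      (fun x hx => (hu.1 x hx).hasDerivAt) (hu.hasDerivAt_deriv_slPot hequ)
      (wronskian_conj_eq_zero_of_robin hα hbcu hbc) ?_ x hx)
    simp [h0, hu₀, hw0 (-1) ⟨le_rfl, by norm_num⟩]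

theorem EigfunAb.isAlgSimpleEigvecA (hb : 0 < b) (hr : ∀ x, 0 < r x) {M : ℝ}
    (hM : ∀ x, ‖slPot q r lam x‖ ≤ M) (hAa : ¬ EigAa a α q r lam) (hB : ¬ EigB hh lam)
    {vlam : ℝ → ℂ} (hvl : EigfunAb b β q r lam vlam) :
    IsAlgSimpleEigvecA a b α β q r hh lam ZeroF ZeroF vlam := by
  obtain ⟨hreg, heq, h0, hbc, hne⟩ := hvl
  have hsol := hreg.solvesOn heq
  have hβ := ofReal_cos_ne_zero_or_ofReal_sin_ne_zero β
  refine ⟨⟨⟨reg2_zeroF, reg2_zeroF, hreg, by simp [ZeroF], by simp [ZeroF], by simp [ZeroF], hbc,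
    rfl, h0⟩, mapA_zeroF_iff.2 ⟨by simp [ZeroF], by simp [ZeroF], heq⟩, Or.inr (Or.inr hne)⟩,
    ?_, ?_⟩
  · rintro u w v ⟨⟨hu, hw, hv, hbcu, hw₁, hw₂, hbcv, hu₀, -⟩, hmap, -⟩
    obtain ⟨hequ, heqw, heqv⟩ := mapA_zeroF_iff.1 hmap
    have hw0 := eqOn_zero_of_not_eigB hB hw heqw hw₁ hw₂
    have hu0 : SolAa a α q r lam 0 u :=
      ⟨hu, hequ, hbcu, hu₀.trans (hw0 (-1) ⟨le_rfl, by norm_num⟩)⟩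
    obtain ⟨k, hk⟩ := (hv.solvesOn heqv).exists_eq_mul (fun x _ => hM x) hsol
      (right_mem_Icc.2 hb.le) (wronskian_eq_zero_of_robin hβ hbcv hbc) hne
    exact ⟨k, by simpa [ZeroF] using hu0.eqOn_zero hAa, by simpa [ZeroF] using hw0, hk⟩
  · rintro ⟨u, w, v, ⟨-, hw, hv, -, hw₁, hw₂, hbcv, -, hv₀⟩, -, heqw, heqv⟩
    have hw0 := eqOn_zero_of_not_eigB hB hw
      (fun t ht => by simpa [ZeroF, sub_eq_zero] using heqw t ht) hw₁ hw₂
    obtain ⟨x, hx, hvx⟩ := hne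
    refine hvx (hsol.eqOn_zero_of_inhomogeneous hb (fun x _ => hr x) (by simp [h0])
      (wronskian_conj_eq_zero_of_robin hβ hbc hbc)
      (fun x hx => (hv.1 x hx).hasDerivAt) (hv.hasDerivAt_deriv_slPot heqv) ?_
      (wronskian_conj_eq_zero_of_robin hβ hbcv hbc) x hx)
    simp [h0, hv₀, hw0 1 ⟨by norm_num, le_rfl⟩]

theorem EigfunB.isAlgSimpleEigvecA (ha : a < 0) (hb : 0 < b) (hh₀ : ∀ t, 0 < hh t) {M M' : ℝ}
    (hM : ∀ x, ‖slPot q r lam x‖ ≤ M) (hM' : ∀ t, ‖slPot 0 hh lam t‖ ≤ M')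
    (hAa : ¬ EigAa a α q r lam) (hAb : ¬ EigAb b β q r lam) {wlam u v : ℝ → ℂ}
    (hwl : EigfunB hh lam wlam) (hu : SolAa a α q r lam (wlam (-1)) u)
    (hv : SolAb b β q r lam (wlam 1) v) : IsAlgSimpleEigvecA a b α β q r hh lam u wlam v := by
  obtain ⟨hreg, heq, hd₁, hd₂, hne⟩ := hwl
  have hsol := hreg.solvesOn_neumann heq
  have hm₁ : (-1 : ℝ) ∈ Icc (-1 : ℝ) 1 := ⟨le_rfl, by norm_num⟩
  have h₁ : (1 : ℝ) ∈ Icc (-1 : ℝ) 1 := ⟨by norm_num, le_rfl⟩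
  refine ⟨⟨⟨hu.1, hreg, hv.1, hu.2.2.1, hd₁, hd₂, hv.2.2.2, hu.2.2.2, hv.2.2.1⟩,
    mapA_zeroF_iff.2 ⟨hu.2.1, heq, hv.2.1⟩, Or.inr (Or.inl hne)⟩, ?_, ?_⟩
  · rintro u' w' v' ⟨⟨hu', hw', hv', hbcu', hw₁', hw₂', hbcv', hu₀', hv₀'⟩, hmap, -⟩
    obtain ⟨hequ', heqw', heqv'⟩ := mapA_zeroF_iff.1 hmap
    obtain ⟨k, hk⟩ := (hw'.solvesOn_neumann heqw').exists_eq_mul (fun t _ => hM' t) hsol hm₁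
      (by simp [hw₁', hd₁]) hne
    exact ⟨k, hu.eqOn_mul hAa ha hM ⟨hu', hequ', hbcu', hu₀'⟩ (hk (-1) hm₁), hk,
      hv.eqOn_mul hAb hb hM ⟨hv', heqv', hv₀', hbcv'⟩ (hk 1 h₁)⟩
  · rintro ⟨u₁, w₁, v₁, ⟨-, hw₁, -, -, hd₁', hd₂', -, -, -⟩, -, heqw₁, -⟩
    obtain ⟨t, ht, hwt⟩ := hne
    exact hwt (hsol.eqOn_zero_of_inhomogeneous (by norm_num) (fun t _ => hh₀ t) (by simp [hd₁])
      (by simp [hd₂]) (fun t ht => (hw₁.1 t ht).hasDerivAt)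
      (hw₁.hasDerivAt_deriv_slPot (q := 0) fun t ht => by simpa using heqw₁ t ht)
      (by simp [hd₁, hd₁']) (by simp [hd₂, hd₂']) t ht)

end LimitProblem

theorem stmt12_general (a b α β : ℝ) (ha : a < 0) (hb : 0 < b) (q r hh : ℝ → ℝ)
    (hqb : ∃ M, ∀ x, |q x| ≤ M)
    (hrpos : ∃ m > 0, ∀ x, m ≤ r x) (hrb : ∃ M, ∀ x, r x ≤ M)
    (hhpos : ∃ m > 0, ∀ t, m ≤ hh t) (hhb : ∃ M, ∀ t, hh t ≤ M)
    (lam : ℂ) :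
    -- case λ ∈ σ(A_a) only
    ((EigAa a α q r lam ∧ ¬ EigB hh lam ∧ ¬ EigAb b β q r lam) →
      ∀ ulam, EigfunAa a α q r lam ulam →
        EigvecA a b α β q r hh lam ulam ZeroF ZeroF ∧
        (∀ u w v, EigvecA a b α β q r hh lam u w v → ∃ c : ℂ,
          (∀ x ∈ Icc a 0, u x = c * ulam x) ∧ (∀ t ∈ Icc (-1:ℝ) 1, w t = 0) ∧
          (∀ x ∈ Icc 0 b, v x = 0)) ∧
        ¬ ∃ u w v, DomA a b α β u w v ∧ MapA a b q r hh lam u w v ulam ZeroF ZeroF) ∧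
    -- case λ ∈ σ(A_b) only
    ((EigAb b β q r lam ∧ ¬ EigAa a α q r lam ∧ ¬ EigB hh lam) →
      ∀ vlam, EigfunAb b β q r lam vlam →
        EigvecA a b α β q r hh lam ZeroF ZeroF vlam ∧
        (∀ u w v, EigvecA a b α β q r hh lam u w v → ∃ c : ℂ,
          (∀ x ∈ Icc a 0, u x = 0) ∧ (∀ t ∈ Icc (-1:ℝ) 1, w t = 0) ∧
          (∀ x ∈ Icc 0 b, v x = c * vlam x)) ∧
        ¬ ∃ u w v, DomA a b α β u w v ∧ MapA a b q r hh lam u w v ZeroF ZeroF vlam) ∧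
    -- case λ ∈ σ(B) only
    ((EigB hh lam ∧ ¬ EigAa a α q r lam ∧ ¬ EigAb b β q r lam) →
      ∀ wlam, EigfunB hh lam wlam →
        ∀ u v, SolAa a α q r lam (wlam (-1)) u → SolAb b β q r lam (wlam 1) v →
          EigvecA a b α β q r hh lam u wlam v ∧
          (∀ u' w' v', EigvecA a b α β q r hh lam u' w' v' → ∃ c : ℂ,
            (∀ x ∈ Icc a 0, u' x = c * u x) ∧ (∀ t ∈ Icc (-1:ℝ) 1, w' t = c * wlam t) ∧
            (∀ x ∈ Icc 0 b, v' x = c * v x)) ∧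
          ¬ ∃ u₁ w₁ v₁, DomA a b α β u₁ w₁ v₁ ∧
            MapA a b q r hh lam u₁ w₁ v₁ u wlam v) := by
  have hr : ∀ x, 0 < r x := fun x => hrpos.elim fun _ ⟨hm, hmr⟩ => hm.trans_le (hmr x)
  have hh₀ : ∀ t, 0 < hh t := fun t => hhpos.elim fun _ ⟨hm, hmh⟩ => hm.trans_le (hmh t)
  obtain ⟨M, hM⟩ := exists_norm_slPot_le hqb
    (hrb.imp fun _ hM x => (abs_of_pos (hr x)).trans_le (hM x)) lam
  obtain ⟨M', hM'⟩ := exists_norm_slPot_le (Q := 0) ⟨0, by simp⟩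
    (hhb.imp fun _ hM t => (abs_of_pos (hh₀ t)).trans_le (hM t)) lam
  refine ⟨fun ⟨_, hB, hAb⟩ ulam hul => ?_, fun ⟨_, hAa, hB⟩ vlam hvl => ?_,
    fun ⟨_, hAa, hAb⟩ wlam hwl u v hu hv => hwl.isAlgSimpleEigvecA ha hb hh₀ hM hM' hAa hAb hu hv⟩
  · simpa [IsAlgSimpleEigvecA, ZeroF] using
      hul.isAlgSimpleEigvecA (b := b) (β := β) (hh := hh) ha hr hM hB hAb
  · simpa [IsAlgSimpleEigvecA, ZeroF] using
      hvl.isAlgSimpleEigvecA (a := a) (α := α) (hh := hh) hb hr hM hAa hB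

/-- if `λ` belongs to exactly one of `σ(A_a)`, `σ(B)`, `σ(A_b)`, then `λ`
is an algebraically simple eigenvalue of `𝓐`, with eigenvector `(u_λ,0,0)`, resp.
`(T_a(λ)w_λ, w_λ, T_b(λ)w_λ)`, resp. `(0,0,v_λ)`. -/
theorem stmt12 (a b α β : ℝ) (ha : a < 0) (hb : 0 < b) (q r hh : ℝ → ℝ)
    (hqm : Measurable q) (hqb : ∃ M, ∀ x, |q x| ≤ M)
    (hrm : Measurable r) (hrpos : ∃ m > 0, ∀ x, m ≤ r x) (hrb : ∃ M, ∀ x, r x ≤ M)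
    (hhm : Measurable hh) (hhpos : ∃ m > 0, ∀ t, m ≤ hh t) (hhb : ∃ M, ∀ t, hh t ≤ M)
    (lam : ℂ) :
    -- case λ ∈ σ(A_a) only
    ((EigAa a α q r lam ∧ ¬ EigB hh lam ∧ ¬ EigAb b β q r lam) →
      ∀ ulam, EigfunAa a α q r lam ulam →
        EigvecA a b α β q r hh lam ulam ZeroF ZeroF ∧
        (∀ u w v, EigvecA a b α β q r hh lam u w v → ∃ c : ℂ,
          (∀ x ∈ Icc a 0, u x = c * ulam x) ∧ (∀ t ∈ Icc (-1:ℝ) 1, w t = 0) ∧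
          (∀ x ∈ Icc 0 b, v x = 0)) ∧
        ¬ ∃ u w v, DomA a b α β u w v ∧ MapA a b q r hh lam u w v ulam ZeroF ZeroF) ∧
    -- case λ ∈ σ(A_b) only
    ((EigAb b β q r lam ∧ ¬ EigAa a α q r lam ∧ ¬ EigB hh lam) →
      ∀ vlam, EigfunAb b β q r lam vlam →
        EigvecA a b α β q r hh lam ZeroF ZeroF vlam ∧
        (∀ u w v, EigvecA a b α β q r hh lam u w v → ∃ c : ℂ,
          (∀ x ∈ Icc a 0, u x = 0) ∧ (∀ t ∈ Icc (-1:ℝ) 1, w t = 0) ∧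
          (∀ x ∈ Icc 0 b, v x = c * vlam x)) ∧
        ¬ ∃ u w v, DomA a b α β u w v ∧ MapA a b q r hh lam u w v ZeroF ZeroF vlam) ∧
    -- case λ ∈ σ(B) only
    ((EigB hh lam ∧ ¬ EigAa a α q r lam ∧ ¬ EigAb b β q r lam) →
      ∀ wlam, EigfunB hh lam wlam →
        ∀ u v, SolAa a α q r lam (wlam (-1)) u → SolAb b β q r lam (wlam 1) v →
          EigvecA a b α β q r hh lam u wlam v ∧
          (∀ u' w' v', EigvecA a b α β q r hh lam u' w' v' → ∃ c : ℂ,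
            (∀ x ∈ Icc a 0, u' x = c * u x) ∧ (∀ t ∈ Icc (-1:ℝ) 1, w' t = c * wlam t) ∧
            (∀ x ∈ Icc 0 b, v' x = c * v x)) ∧
          ¬ ∃ u₁ w₁ v₁, DomA a b α β u₁ w₁ v₁ ∧
            MapA a b q r hh lam u₁ w₁ v₁ u wlam v) :=
  stmt12_general a b α β ha hb q r hh hqb hrpos hrb hhpos hhb lam
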